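/- Let k ≥ 2 be an integer, r̄ a residue with 1 ≤ r̄ ≤ k, and A = {a ∈ ℕ : a ≥ 1 and a ≡ r̄ (mod k)}. If for every integer n ≥ 1 the reduction of D_A modulo kⁿ is all of ℤ/kⁿℤ, then A has no local obstructions: for every integer q ≥ 2 the reduction of D_A modulo q is all of ℤ/qℤ. -/

import Mathlib

/-- The generator matrix `[[0,1],[1,a]]`. -/
def cfGen (a : ℕ) : Matrix (Fin 2) (Fin 2) ℤ := !![0, 1; 1, (a : ℤ)]

/-- The semigroup `G_A`: all nonempty finite products of the generators
`[[0,1],[1,a]]` with `a ∈ A`. -/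
def GSemigroup (A : Set ℕ) : Set (Matrix (Fin 2) (Fin 2) ℤ) :=
  { M | ∃ l : List ℕ, l ≠ [] ∧ (∀ a ∈ l, a ∈ A) ∧ M = (l.map cfGen).prod }

/-- The set `D_A` of bottom-right entries of matrices in `G_A`. -/
def Denoms (A : Set ℕ) : Set ℕ :=
  { d | ∃ M ∈ GSemigroup A, M 1 1 = (d : ℤ) }

/-! Write `q ∣ k ^ q * N` with `N` coprime to `k`, and take `d ∈ D_A` with `d ≡ x (mod k ^ q)`,
the bottom-right entry of a word `a₁ ⋯ aₘ` in `A`. By the Chinese remainder theorem every letter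
can be replaced by an element of `A` with the same residue mod `k ^ q` and any prescribed residue
mod `N`. Modulo `k ^ q` the entry does not change, while modulo `N` a word of length `m` can realise
any residue `t`: take `0 ⋯ 0 t` or `0 ⋯ 0 1 (t - 1)`, since `[[0,1],[1,0]]² = 1`. The new entry is
then `≡ x` modulo `k ^ q * N`, hence modulo `q`. -/

theorem Nat.exists_pos_modEq_and_modEq {m n : ℕ} (hmn : m.Coprime n) (hm : m ≠ 0) (hn : n ≠ 0)
    (a b : ℕ) : ∃ c, 0 < c ∧ c ≡ a [MOD m] ∧ c ≡ b [MOD n] :=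
  ⟨chineseRemainder hmn a b + m * n, by positivity,
    (Nat.add_mul_mod_self_left _ m n).trans (chineseRemainder hmn a b).2.1,
    (Nat.add_mul_mod_self_right _ m n).trans (chineseRemainder hmn a b).2.2⟩

theorem Nat.exists_coprime_dvd_pow_mul (k : ℕ) {q : ℕ} (hq : q ≠ 0) :
    ∃ N, N ≠ 0 ∧ N.Coprime k ∧ q ∣ k ^ q * N := by
  set g := q.gcd (k ^ q)
  have hgq : g * (q / g) = q := Nat.mul_div_cancel' (Nat.gcd_dvd_left q (k ^ q))
  refine ⟨q / g, fun h0 => hq (by rw [← hgq, h0, mul_zero]),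
    Nat.coprime_of_dvd fun p hp hpN hpk => ?_,
    hgq.symm.dvd.trans (mul_dvd_mul_right (Nat.gcd_dvd_right q (k ^ q)) _)⟩
  have hpv : p ^ q.factorization p ∣ g :=
    Nat.dvd_gcd (Nat.ordProj_dvd q p) <| (pow_dvd_pow p (Nat.factorization_lt p hq).le).trans
      (pow_dvd_pow_of_dvd hpk q)
  have := (hp.pow_dvd_iff_le_factorization hq).mp <|
    (pow_succ p _).dvd.trans ((mul_dvd_mul hpv hpN).trans hgq.dvd)
  omega

def AdjustableMod (A : Set ℕ) (K N : ℕ) : Prop :=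
  ∀ a ∈ A, ∀ b : ZMod N, ∃ c ∈ A, (c : ZMod K) = a ∧ (c : ZMod N) = b

def cfMatrix {R : Type*} [Zero R] [One R] (b : R) : Matrix (Fin 2) (Fin 2) R := !![0, 1; 1, b]

section Ring

variable {R : Type*} [Ring R]

theorem cfMatrix_zero_mul_self : cfMatrix (0 : R) * cfMatrix 0 = 1 := by
  ext i j
  fin_cases i <;> fin_cases j <;> simp [cfMatrix]

theorem exists_length_eq_prod_map_cfMatrix_one_one (t : R) (m : ℕ) :
    ∃ bs : List R, bs.length = m + 1 ∧ (bs.map cfMatrix).prod 1 1 = t := by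
  induction m using Nat.twoStepInduction with
  | zero => exact ⟨[t], rfl, by simp [cfMatrix]⟩
  | one => exact ⟨[1, t - 1], rfl, by simp [cfMatrix, Matrix.mul_apply]⟩
  | more m ih _ =>
    obtain ⟨bs, hlen, hbs⟩ := ih
    refine ⟨0 :: 0 :: bs, by simp [hlen], ?_⟩
    rw [List.map_cons, List.map_cons, List.prod_cons, List.prod_cons, ← mul_assoc,
      cfMatrix_zero_mul_self, one_mul, hbs]

variable (R) in
theorem map_prod_map_cfGen (l : List ℕ) :
    (l.map cfGen).prod.map (Int.cast : ℤ → R) = ((l.map Nat.cast).map cfMatrix).prod := by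
  change (Int.castRingHom R).mapMatrix _ = _
  rw [map_list_prod, List.map_map, List.map_map]
  congr 1
  refine List.map_congr_left fun a _ => ?_
  ext i j
  fin_cases i <;> fin_cases j <;> simp [cfGen, cfMatrix]

end Ring

theorem prod_map_cfGen_nonneg (l : List ℕ) (i j : Fin 2) : 0 ≤ (l.map cfGen).prod i j := by
  refine List.prod_induction (fun M : Matrix (Fin 2) (Fin 2) ℤ => ∀ i j, 0 ≤ M i j)
    (fun M M' hM hM' i j => ?_) (fun i j => ?_) (fun M hM => ?_) i j
  · rw [Matrix.mul_apply]
    exact Finset.sum_nonneg fun m _ => mul_nonneg (hM i m) (hM' m j)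
  · fin_cases i <;> fin_cases j <;> simp
  · obtain ⟨a, -, rfl⟩ := List.mem_map.mp hM
    intro i j
    fin_cases i <;> fin_cases j <;> simp [cfGen]

theorem exists_mem_denoms_of_list {A : Set ℕ} {l : List ℕ} (hl : l ≠ [])
    (hlA : ∀ a ∈ l, a ∈ A) :
    ∃ d ∈ Denoms A, (d : ℤ) = (l.map cfGen).prod 1 1 :=
  ⟨_, ⟨_, ⟨l, hl, hlA, rfl⟩, (Int.toNat_of_nonneg (prod_map_cfGen_nonneg l 1 1)).symm⟩,
    Int.toNat_of_nonneg (prod_map_cfGen_nonneg l 1 1)⟩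

theorem AdjustableMod.exists_list {A : Set ℕ} {K N : ℕ} (hA : AdjustableMod A K N) :
    ∀ (l : List ℕ) (bs : List (ZMod N)), (∀ a ∈ l, a ∈ A) → l.length = bs.length →
      ∃ l' : List ℕ, (∀ c ∈ l', c ∈ A) ∧ l'.map (Nat.cast : ℕ → ZMod K) = l.map Nat.cast ∧
        l'.map (Nat.cast : ℕ → ZMod N) = bs
  | [], [], _, _ => ⟨[], by simp⟩
  | a :: l, b :: bs, hlA, hlen => by
    obtain ⟨c, hc, hcK, hcN⟩ := hA a (hlA a List.mem_cons_self) b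
    obtain ⟨l', hl'A, hl'K, hl'N⟩ :=
      hA.exists_list l bs (fun a ha => hlA a (List.mem_cons_of_mem _ ha)) (by simpa using hlen)
    exact ⟨c :: l', by simpa [hc] using hl'A, by simp [hcK, hl'K], by simp [hcN, hl'N]⟩

theorem exists_mem_denoms_natCast_eq_of_adjustableMod {A : Set ℕ} {K N : ℕ}
    (hKN : K.Coprime N) (hA : AdjustableMod A K N) {d x : ℕ} (hd : d ∈ Denoms A)
    (hdx : (d : ZMod K) = x) :
    ∃ d' ∈ Denoms A, (d' : ZMod (K * N)) = x := by
  obtain ⟨_, ⟨l, hl, hlA, rfl⟩, hd⟩ := hd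
  obtain ⟨m, hm⟩ := Nat.exists_eq_add_one.mpr (List.length_pos_iff.mpr hl)
  obtain ⟨bs, hbs, hbsx⟩ := exists_length_eq_prod_map_cfMatrix_one_one (x : ZMod N) m
  obtain ⟨l', hl'A, hl'K, hl'N⟩ := hA.exists_list l bs hlA (hm.trans hbs.symm)
  have hl' : l' ≠ [] := by
    rintro rfl
    simp [← hl'N] at hbs
  obtain ⟨d', hd', hd'l'⟩ := exists_mem_denoms_of_list hl' hl'A
  refine ⟨d', hd', ?_⟩
  have hK : (d' : ZMod K) = x := by
    have := congrFun (congrFun (map_prod_map_cfGen (ZMod K) l') 1) 1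
    rw [hl'K, ← map_prod_map_cfGen, Matrix.map_apply, Matrix.map_apply, hd, ← hd'l'] at this
    push_cast at this
    exact this.trans hdx
  have hN : (d' : ZMod N) = x := by
    have := congrFun (congrFun (map_prod_map_cfGen (ZMod N) l') 1) 1
    rw [hl'N, hbsx, Matrix.map_apply, ← hd'l'] at this
    exact_mod_cast this
  rw [ZMod.natCast_eq_natCast_iff] at hK hN ⊢
  exact (Nat.modEq_and_modEq_iff_modEq_mul hKN).mp ⟨hK, hN⟩

theorem adjustableMod_residueClass {k r K N : ℕ} [NeZero N] (hkK : k ∣ K) (hK : K ≠ 0)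
    (hKN : K.Coprime N) : AdjustableMod {a : ℕ | 1 ≤ a ∧ a ≡ r [MOD k]} K N := by
  rintro a ⟨-, har⟩ b
  obtain ⟨c, hc, hcK, hcN⟩ := Nat.exists_pos_modEq_and_modEq hKN hK (NeZero.ne N) a b.val
  refine ⟨c, ⟨hc, (hcK.of_dvd hkK).trans har⟩, (ZMod.natCast_eq_natCast_iff _ _ _).mpr hcK, ?_⟩
  rw [(ZMod.natCast_eq_natCast_iff _ _ _).mpr hcN, ZMod.natCast_zmod_val]

theorem no_local_obstructions_of_surjective_prime_power_general (k r : ℕ)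
    (hk : 2 ≤ k)
    (h : ∀ n : ℕ, 1 ≤ n → ∀ x : ZMod (k ^ n),
      ∃ d ∈ Denoms {a : ℕ | 1 ≤ a ∧ a ≡ r [MOD k]}, (d : ZMod (k ^ n)) = x) :
    ∀ q : ℕ, 2 ≤ q → ∀ x : ZMod q,
      ∃ d ∈ Denoms {a : ℕ | 1 ≤ a ∧ a ≡ r [MOD k]}, (d : ZMod q) = x := by
  intro q hq x
  have : NeZero q := ⟨by omega⟩
  obtain ⟨N, hN0, hNk, hqKN⟩ := Nat.exists_coprime_dvd_pow_mul k (NeZero.ne q)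
  have : NeZero N := ⟨hN0⟩
  have hKN : (k ^ q).Coprime N := (hNk.pow_right q).symm
  obtain ⟨d, hd, hdx⟩ := h q (by omega) x.val
  have hA := adjustableMod_residueClass (r := r) (dvd_pow_self k (NeZero.ne q))
    (pow_ne_zero q (by omega)) hKN
  obtain ⟨d', hd', hd'x⟩ := exists_mem_denoms_natCast_eq_of_adjustableMod hKN hA hd hdx
  refine ⟨d', hd', ?_⟩
  rw [(ZMod.natCast_eq_natCast_iff _ _ _).mpr
    (((ZMod.natCast_eq_natCast_iff _ _ _).mp hd'x).of_dvd hqKN), ZMod.natCast_zmod_val]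

/-- For `A = {a ≥ 1 : a ≡ r̄ (mod k)}`: if `D_A` surjects onto `ℤ/kⁿℤ` for every
`n ≥ 1`, then `A` has no local obstructions. -/
theorem no_local_obstructions_of_surjective_prime_power (k r : ℕ)
    (hk : 2 ≤ k) (hr1 : 1 ≤ r) (hrk : r ≤ k)
    (h : ∀ n : ℕ, 1 ≤ n → ∀ x : ZMod (k ^ n),
      ∃ d ∈ Denoms {a : ℕ | 1 ≤ a ∧ a ≡ r [MOD k]}, (d : ZMod (k ^ n)) = x) :
    ∀ q : ℕ, 2 ≤ q → ∀ x : ZMod q,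
      ∃ d ∈ Denoms {a : ℕ | 1 ≤ a ∧ a ≡ r [MOD k]}, (d : ZMod q) = x :=
  no_local_obstructions_of_surjective_prime_power_general k r hk h
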